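/- arXiv:2411.01446 — 4 statements merged into one kernel-verified Lean document; each statement's English description precedes it below -/
import Mathlib

section
/- Let M ≥ 1, η ∈ (0,1), and 0 ≤ ℓ_max ≤ M. Let L be a random variable on {0,1,…,ℓ_max} with P(L = ℓ) = Λ_ℓ, where Σ_{ℓ=0}^{ℓ_max} Λ_ℓ = 1. Given L = ℓ ≥ 1, let S be a uniformly random ℓ-element subset of {1,…,M} and X := max S; given L = 0, set X := 0. Let Y be independent of (L, S) and geometrically distributed on {1,2,…} with P(Y = y) = (1−η)^{y−1}·η. Then P(X < Y) = Σ_{y=1}^{M} η·(1−η)^{y−1} · Σ_{ℓ=0}^{ℓ_max} Λ_ℓ · (y−1)!·(M−ℓ)! / ((y−ℓ−1)!·M!) + (1−η)^M, where the summand for a pair (y, ℓ) with y ≤ ℓ is interpreted as 0. (Multiplied by the probability φ_0 that the initial battery level is 0, this expression is the PLR lower bound of Theorem 1.) -/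
/-
Since `X` is a function of `(L, S)`, the event `{X < y}` is a countable union of atoms
`{L = ℓ, S = s}`, hence independent of `{Y = y}`, and summing over the value of `Y` gives
`P(X < Y) = ∑_y P(X < y) P(Y = y)`. For `1 ≤ y ≤ M` and `L = ℓ ≥ 1`, almost surely
`S ⊆ {1,…,M}`, so `X < y` means `S ⊆ {1,…,y-1}`, which has probability
`C(y-1, ℓ) / C(M, ℓ) = (y-1)! (M-ℓ)! / ((y-ℓ-1)! M!)`. For `y > M` we have `X < y` almost
surely, and the geometric tail `∑_{y > M} P(Y = y)` is `(1 - η)^M`.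
-/

open MeasureTheory Finset
open scoped ENNReal

lemma preimage_prodMk_singleton {Ω α β : Type*} (L : Ω → α) (S : Ω → β) (p : α × β) :
    (fun ω => (L ω, S ω)) ⁻¹' {p} = {ω | L ω = p.1 ∧ S ω = p.2} := by
  ext; simp [Prod.ext_iff]

section Fibers

variable {Ω ι : Type*} [MeasurableSpace Ω] [Countable ι] {F : Ω → ι}

lemma measurableSet_preimage_of_measurableSet_fiber (hF : ∀ i, MeasurableSet (F ⁻¹' {i}))
    (A : Set ι) : MeasurableSet (F ⁻¹' A) := by
  rw [← Set.biUnion_preimage_singleton]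
  exact .biUnion A.to_countable fun i _ => hF i

lemma measure_preimage_inter_eq_mul_of_fiber (μ : Measure Ω)
    (hF : ∀ i, MeasurableSet (F ⁻¹' {i})) {B : Set Ω}
    (hindep : ∀ i, μ (F ⁻¹' {i} ∩ B) = μ (F ⁻¹' {i}) * μ B) (A : Set ι) :
    μ (F ⁻¹' A ∩ B) = μ (F ⁻¹' A) * μ B := by
  rw [← Measure.restrict_apply (measurableSet_preimage_of_measurableSet_fiber hF A),
    ← tsum_measure_preimage_singleton A.to_countable fun i _ => hF i,
    ← tsum_measure_preimage_singleton A.to_countable fun i _ => hF i, ← ENNReal.tsum_mul_right]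
  simp_rw [Measure.restrict_apply (hF _), hindep]

lemma measure_eq_sum_measure_inter_of_ae_le {μ : Measure Ω} {L : Ω → ℕ} {n : ℕ}
    (hL : ∀ k, MeasurableSet {ω | L ω = k}) (hle : ∀ᵐ ω ∂μ, L ω ≤ n) (E : Set Ω) :
    μ E = ∑ k ∈ range (n + 1), μ ({ω | L ω = k} ∩ E) := by
  have hU : {ω | L ω ≤ n} = L ⁻¹' ↑(range (n + 1)) := by ext; simp
  calc μ E = μ (L ⁻¹' ↑(range (n + 1)) ∩ E) := by
        rw [Set.inter_comm, measure_inter_conull (by rw [← hU]; exact hle)]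
    _ = μ.restrict E (L ⁻¹' ↑(range (n + 1))) :=
        (Measure.restrict_apply (measurableSet_preimage_of_measurableSet_fiber hL _)).symm
    _ = ∑ k ∈ range (n + 1), μ ({ω | L ω = k} ∩ E) := by
        rw [← sum_measure_preimage_singleton _ fun k _ => hL k]
        exact Finset.sum_congr rfl fun k _ => Measure.restrict_apply (hL k)

lemma measure_setOf_lt_eq_tsum {μ : Measure Ω} {f Y : Ω → ℕ}
    (hf : ∀ y, MeasurableSet {ω | f ω < y}) (hY : ∀ y, MeasurableSet {ω | Y ω = y})
    (hindep : ∀ y, μ ({ω | f ω < y} ∩ {ω | Y ω = y}) = μ {ω | f ω < y} * μ {ω | Y ω = y}) :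
    μ {ω | f ω < Y ω} = ∑' y, μ {ω | f ω < y} * μ {ω | Y ω = y} := by
  have hU : {ω | f ω < Y ω} = ⋃ y, {ω | f ω < y} ∩ {ω | Y ω = y} := by ext; simp
  rw [hU, measure_iUnion (fun i j hij => Disjoint.mono Set.inter_subset_right Set.inter_subset_right
    (Set.disjoint_left.2 fun ω hi hj => hij (hi.symm.trans hj))) fun y => (hf y).inter (hY y)]
  exact tsum_congr hindep

end Fibers

lemma hasSum_pow_add_mul_one_sub {r : ℝ} (h0 : 0 ≤ r) (h1 : r < 1) (M : ℕ) :
    HasSum (fun i : ℕ => r ^ (i + M) * (1 - r)) (r ^ M) := by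
  have h := (hasSum_geometric_of_lt_one h0 h1).mul_right (r ^ M * (1 - r))
  rw [mul_comm (r ^ M), inv_mul_cancel_left₀ (sub_pos.2 h1).ne'] at h
  have hf : (fun i : ℕ => r ^ (i + M) * (1 - r)) = fun i => r ^ i * ((1 - r) * r ^ M) := by
    funext i
    ring
  exact hf ▸ h

lemma choose_div_choose_eq_ite {y ℓ M : ℕ} (hℓM : ℓ ≤ M) (hy : 1 ≤ y) :
    ((y - 1).choose ℓ : ℝ) / M.choose ℓ =
      if ℓ < y then ((y - 1).factorial * (M - ℓ).factorial : ℝ) /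
        ((y - ℓ - 1).factorial * M.factorial) else 0 := by
  split_ifs with hlt
  · rw [Nat.choose_eq_factorial_div_factorial (by omega), Nat.choose_eq_factorial_div_factorial hℓM,
      Nat.cast_div (Nat.factorial_mul_factorial_dvd_factorial (by omega)) (by positivity),
      Nat.cast_div (Nat.factorial_mul_factorial_dvd_factorial hℓM) (by positivity),
      show y - 1 - ℓ = y - ℓ - 1 by omega]
    push_cast
    field_simp
  · rw [Nat.choose_eq_zero_of_lt (by omega), Nat.cast_zero, zero_div]

lemma natCast_mul_ofReal_mul_inv_natCast {n c : ℕ} (hc : c ≠ 0) {a : ℝ} (ha : 0 ≤ a) :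
    (n : ℝ≥0∞) * (ENNReal.ofReal a * (c : ℝ≥0∞)⁻¹) = ENNReal.ofReal (a * (n / c)) := by
  rw [ENNReal.ofReal_mul ha, ENNReal.ofReal_div_of_pos (by positivity), ENNReal.ofReal_natCast,
    ENNReal.ofReal_natCast, ENNReal.div_eq_inv_mul]
  ring

def lastSlot (p : ℕ × Finset ℕ) : ℕ := if p.1 = 0 then 0 else p.2.sup id

lemma lastSlot_le {k M : ℕ} {s : Finset ℕ} (hs : k ≠ 0 → s ⊆ Icc 1 M) :
    lastSlot (k, s) ≤ M := by
  unfold lastSlot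
  split_ifs with hk
  · exact Nat.zero_le M
  · exact Finset.sup_le fun i hi => (mem_Icc.1 (hs hk hi)).2

lemma lastSlot_lt_iff {k y : ℕ} {s : Finset ℕ} (hk : k ≠ 0) (hy : 1 ≤ y)
    (hs : ∀ i ∈ s, 1 ≤ i) : lastSlot (k, s) < y ↔ s ⊆ Icc 1 (y - 1) := by
  simp only [lastSlot, hk, if_false, Finset.sup_lt_iff (show ⊥ < y from hy), id, subset_iff,
    mem_Icc]
  exact forall₂_congr fun i hi => by have := hs i hi; omega

lemma eq_lastSlot {n k : ℕ} {s : Finset ℕ}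
    (h : (k = 0 → n = 0) ∧ (k ≠ 0 → n ∈ s ∧ ∀ i ∈ s, i ≤ n)) : n = lastSlot (k, s) := by
  unfold lastSlot
  split_ifs with hk
  · exact h.1 hk
  · obtain ⟨hn, hmax⟩ := h.2 hk
    exact le_antisymm (Finset.le_sup (f := id) hn) (Finset.sup_le hmax)

-- `P(X < y)` for `1 ≤ y ≤ M`: the summand is `Λ ℓ * C(y-1, ℓ) / C(M, ℓ)`.
noncomputable def allBeforeProb (M ℓmax : ℕ) (Λ : ℕ → ℝ) (y : ℕ) : ℝ :=
  ∑ ℓ ∈ range (ℓmax + 1), Λ ℓ *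
    (if ℓ < y then ((y - 1).factorial * (M - ℓ).factorial : ℝ) /
      ((y - ℓ - 1).factorial * M.factorial) else 0)

lemma allBeforeProb_nonneg {M ℓmax : ℕ} {Λ : ℕ → ℝ} (hΛ : ∀ ℓ ≤ ℓmax, 0 ≤ Λ ℓ) (y : ℕ) :
    0 ≤ allBeforeProb M ℓmax Λ y :=
  sum_nonneg fun ℓ hℓ => mul_nonneg (hΛ ℓ (Nat.lt_succ_iff.1 (mem_range.1 hℓ)))
    (by split_ifs <;> positivity)

section Model

variable {Ω : Type*} [MeasurableSpace Ω] {P : Measure Ω} {L : Ω → ℕ} {S : Ω → Finset ℕ}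
  {M ℓmax : ℕ} {Λ : ℕ → ℝ}

lemma ae_le_and_mem_powersetCard [IsProbabilityMeasure P]
    (hF : ∀ p, MeasurableSet ((fun ω => (L ω, S ω)) ⁻¹' {p}))
    (hLsupp : P {ω | L ω ≤ ℓmax} = 1)
    (hSsupp : ∀ ℓ, 1 ≤ ℓ → ℓ ≤ ℓmax →
      P {ω | L ω = ℓ ∧ S ω ∈ (Icc 1 M).powersetCard ℓ} = P {ω | L ω = ℓ}) :
    ∀ᵐ ω ∂P, L ω ≤ ℓmax ∧ (L ω ≠ 0 → S ω ∈ (Icc 1 M).powersetCard (L ω)) := by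
  have hle : ∀ᵐ ω ∂P, L ω ≤ ℓmax :=
    (ae_iff_measure_eq (measurableSet_preimage_of_measurableSet_fiber hF
      {p | p.1 ≤ ℓmax}).nullMeasurableSet).2 (by rw [measure_univ]; exact hLsupp)
  have hmem : ∀ ℓ, ∀ᵐ ω ∂P, 1 ≤ ℓ → ℓ ≤ ℓmax → L ω = ℓ → S ω ∈ (Icc 1 M).powersetCard ℓ := by
    intro ℓ
    by_cases hℓ : 1 ≤ ℓ ∧ ℓ ≤ ℓmax
    · have hsub : {ω | L ω = ℓ ∧ S ω ∈ (Icc 1 M).powersetCard ℓ} ⊆ {ω | L ω = ℓ} :=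
        fun ω h => h.1
      have hae := ae_eq_of_subset_of_measure_ge hsub
        (hSsupp ℓ hℓ.1 hℓ.2).ge (measurableSet_preimage_of_measurableSet_fiber hF
          {p | p.1 = ℓ ∧ p.2 ∈ (Icc 1 M).powersetCard ℓ}).nullMeasurableSet
        (measure_ne_top P _)
      filter_upwards [Filter.eventuallyEq_set.1 hae] with ω hω _ _ hL
      exact (hω.2 hL).2
    · exact .of_forall fun ω h1 h2 => absurd ⟨h1, h2⟩ hℓ
  filter_upwards [hle, ae_all_iff.2 hmem] with ω hle hmem
  exact ⟨hle, fun h0 => hmem _ (Nat.one_le_iff_ne_zero.2 h0) hle rfl⟩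

lemma measure_fiber_inter_lastSlot_lt (hF : ∀ p, MeasurableSet ((fun ω => (L ω, S ω)) ⁻¹' {p}))
    (hwf : ∀ᵐ ω ∂P, L ω ≤ ℓmax ∧ (L ω ≠ 0 → S ω ∈ (Icc 1 M).powersetCard (L ω)))
    (hℓmax : ℓmax ≤ M) (hΛ0 : ∀ ℓ ≤ ℓmax, 0 ≤ Λ ℓ)
    (hLdist : ∀ ℓ ≤ ℓmax, P {ω | L ω = ℓ} = ENNReal.ofReal (Λ ℓ))
    (hScond : ∀ ℓ, 1 ≤ ℓ → ℓ ≤ ℓmax → ∀ s ∈ (Icc 1 M).powersetCard ℓ,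
      P {ω | L ω = ℓ ∧ S ω = s} = P {ω | L ω = ℓ} * (M.choose ℓ : ℝ≥0∞)⁻¹)
    {ℓ y : ℕ} (hℓ : ℓ ≤ ℓmax) (hy1 : 1 ≤ y) (hyM : y ≤ M) :
    P ({ω | L ω = ℓ} ∩ {ω | lastSlot (L ω, S ω) < y}) =
      ENNReal.ofReal (Λ ℓ * ((y - 1).choose ℓ / M.choose ℓ)) := by
  rcases Nat.eq_zero_or_pos ℓ with rfl | hℓ0
  · have hL0 : {ω | L ω = 0} ∩ {ω | lastSlot (L ω, S ω) < y} = {ω | L ω = 0} :=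
      Set.inter_eq_left.2 fun ω (hω : L ω = 0) => by
        simp only [lastSlot, Set.mem_ofPred_eq, hω, ↓reduceIte]
        omega
    simp [hL0, hLdist 0 (Nat.zero_le _)]
  set T := (Icc 1 (y - 1)).powersetCard ℓ
  have hae : ({ω | L ω = ℓ} ∩ {ω | lastSlot (L ω, S ω) < y} : Set Ω) =ᵐ[P]
      (fun ω => (L ω, S ω)) ⁻¹' ↑(({ℓ} : Finset ℕ) ×ˢ T) := by
    refine Filter.eventuallyEq_set.2 ?_
    filter_upwards [hwf] with ω hω
    simp only [Set.mem_inter_iff, Set.mem_ofPred_eq, Set.mem_preimage, coe_product, coe_singleton,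
      Set.mem_prod, Set.mem_singleton_iff, mem_coe]
    refine and_congr_right fun hL => ?_
    have hS := mem_powersetCard.1 (hL ▸ hω.2 (by omega))
    rw [lastSlot_lt_iff (by omega) hy1 fun i hi => (mem_Icc.1 (hS.1 hi)).1, mem_powersetCard]
    simp [hS.2]
  have hT : T ⊆ (Icc 1 M).powersetCard ℓ := powersetCard_mono (Icc_subset_Icc_right (by omega))
  rw [measure_congr hae, ← sum_measure_preimage_singleton _ fun p _ => hF p, sum_product,
    sum_singleton]
  simp only [preimage_prodMk_singleton]
  rw [sum_congr rfl fun s hs => hScond ℓ hℓ0 hℓ s (hT hs), sum_const, card_powersetCard,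
    Nat.card_Icc, Nat.add_sub_cancel, nsmul_eq_mul, hLdist ℓ hℓ]
  exact natCast_mul_ofReal_mul_inv_natCast (Nat.choose_pos (hℓ.trans hℓmax)).ne' (hΛ0 ℓ hℓ)

lemma measure_lastSlot_lt_of_le (hF : ∀ p, MeasurableSet ((fun ω => (L ω, S ω)) ⁻¹' {p}))
    (hwf : ∀ᵐ ω ∂P, L ω ≤ ℓmax ∧ (L ω ≠ 0 → S ω ∈ (Icc 1 M).powersetCard (L ω)))
    (hℓmax : ℓmax ≤ M) (hΛ0 : ∀ ℓ ≤ ℓmax, 0 ≤ Λ ℓ)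
    (hLdist : ∀ ℓ ≤ ℓmax, P {ω | L ω = ℓ} = ENNReal.ofReal (Λ ℓ))
    (hScond : ∀ ℓ, 1 ≤ ℓ → ℓ ≤ ℓmax → ∀ s ∈ (Icc 1 M).powersetCard ℓ,
      P {ω | L ω = ℓ ∧ S ω = s} = P {ω | L ω = ℓ} * (M.choose ℓ : ℝ≥0∞)⁻¹)
    {y : ℕ} (hy1 : 1 ≤ y) (hyM : y ≤ M) :
    P {ω | lastSlot (L ω, S ω) < y} = ENNReal.ofReal (allBeforeProb M ℓmax Λ y) := by
  have hℓ : ∀ ℓ ∈ range (ℓmax + 1), ℓ ≤ ℓmax := fun ℓ hℓ => Nat.lt_succ_iff.1 (mem_range.1 hℓ)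
  rw [measure_eq_sum_measure_inter_of_ae_le
      (fun k => measurableSet_preimage_of_measurableSet_fiber hF {p | p.1 = k})
      (hwf.mono fun _ h => h.1),
    sum_congr rfl fun ℓ hℓ' => measure_fiber_inter_lastSlot_lt hF hwf hℓmax hΛ0 hLdist hScond
      (hℓ ℓ hℓ') hy1 hyM,
    ← ENNReal.ofReal_sum_of_nonneg fun ℓ hℓ' => mul_nonneg (hΛ0 ℓ (hℓ ℓ hℓ')) (by positivity)]
  exact congrArg ENNReal.ofReal (sum_congr rfl fun ℓ hℓ' => by
    rw [choose_div_choose_eq_ite ((hℓ ℓ hℓ').trans hℓmax) hy1])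

lemma measure_lastSlot_lt_of_lt [IsProbabilityMeasure P]
    (hF : ∀ p, MeasurableSet ((fun ω => (L ω, S ω)) ⁻¹' {p}))
    (hwf : ∀ᵐ ω ∂P, L ω ≤ ℓmax ∧ (L ω ≠ 0 → S ω ∈ (Icc 1 M).powersetCard (L ω)))
    {y : ℕ} (hMy : M < y) : P {ω | lastSlot (L ω, S ω) < y} = 1 := by
  have hmeas : MeasurableSet {ω | lastSlot (L ω, S ω) < y} :=
    measurableSet_preimage_of_measurableSet_fiber hF {p | lastSlot p < y}
  refine ((ae_iff_measure_eq hmeas.nullMeasurableSet).1 ?_).trans measure_univ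
  filter_upwards [hwf] with ω hω
  exact (lastSlot_le fun h0 => (mem_powersetCard.1 (hω.2 h0)).1).trans_lt hMy

end Model

theorem stmt_5_general {Ω : Type*} [MeasurableSpace Ω] (P : Measure Ω) [IsProbabilityMeasure P]
    (M ℓmax : ℕ) (hℓmax : ℓmax ≤ M) (η : ℝ) (hη0 : 0 < η) (hη1 : η < 1)
    (Λ : ℕ → ℝ) (hΛ0 : ∀ ℓ ≤ ℓmax, 0 ≤ Λ ℓ)
    (L : Ω → ℕ) (S : Ω → Finset ℕ) (X Y : Ω → ℕ)
    (hLSmeas : ∀ (k : ℕ) (s : Finset ℕ), MeasurableSet {ω | L ω = k ∧ S ω = s})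
    (hYmeas : ∀ k : ℕ, MeasurableSet {ω | Y ω = k})
    (hLsupp : P {ω | L ω ≤ ℓmax} = 1)
    (hLdist : ∀ ℓ ≤ ℓmax, P {ω | L ω = ℓ} = ENNReal.ofReal (Λ ℓ))
    (hScond : ∀ ℓ, 1 ≤ ℓ → ℓ ≤ ℓmax → ∀ s ∈ (Finset.Icc 1 M).powersetCard ℓ,
      P {ω | L ω = ℓ ∧ S ω = s} = P {ω | L ω = ℓ} * (M.choose ℓ : ℝ≥0∞)⁻¹)
    (hSsupp : ∀ ℓ, 1 ≤ ℓ → ℓ ≤ ℓmax →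
      P {ω | L ω = ℓ ∧ S ω ∈ (Finset.Icc 1 M).powersetCard ℓ} = P {ω | L ω = ℓ})
    (hX : ∀ ω, (L ω = 0 → X ω = 0) ∧
      (L ω ≠ 0 → X ω ∈ S ω ∧ ∀ i ∈ S ω, i ≤ X ω))
    (hY0 : P {ω | Y ω = 0} = 0)
    (hYgeom : ∀ k : ℕ, 1 ≤ k →
      P {ω | Y ω = k} = ENNReal.ofReal ((1 - η) ^ (k - 1) * η))
    (hindep : ∀ (k : ℕ) (s : Finset ℕ) (y : ℕ),
      P ({ω | L ω = k ∧ S ω = s} ∩ {ω | Y ω = y}) =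
        P {ω | L ω = k ∧ S ω = s} * P {ω | Y ω = y}) :
    P {ω | X ω < Y ω} =
      ENNReal.ofReal (∑ y ∈ Finset.Icc 1 M, η * (1 - η) ^ (y - 1) *
        ∑ ℓ ∈ Finset.range (ℓmax + 1), Λ ℓ *
          (if ℓ < y then ((y - 1).factorial * (M - ℓ).factorial : ℝ) /
            ((y - ℓ - 1).factorial * M.factorial) else 0) + (1 - η) ^ M) := by
  have hF : ∀ p, MeasurableSet ((fun ω => (L ω, S ω)) ⁻¹' {p}) := fun p => by
    rw [preimage_prodMk_singleton]; exact hLSmeas p.1 p.2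
  have hwf := ae_le_and_mem_powersetCard hF hLsupp hSsupp
  obtain rfl : X = fun ω => lastSlot (L ω, S ω) := funext fun ω => eq_lastSlot (hX ω)
  have hhead : ∀ y ∈ Icc 1 M, P {ω | lastSlot (L ω, S ω) < y} * P {ω | Y ω = y} =
      ENNReal.ofReal (η * (1 - η) ^ (y - 1) * allBeforeProb M ℓmax Λ y) := fun y hy => by
    obtain ⟨hy1, hyM⟩ := mem_Icc.1 hy
    rw [measure_lastSlot_lt_of_le hF hwf hℓmax hΛ0 hLdist hScond hy1 hyM, hYgeom y hy1,
      ← ENNReal.ofReal_mul (allBeforeProb_nonneg hΛ0 y)]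
    congr 1
    ring
  have htail : ∑' i, P {ω | lastSlot (L ω, S ω) < i + (M + 1)} * P {ω | Y ω = i + (M + 1)} =
      ENNReal.ofReal ((1 - η) ^ M) := by
    have hgeom := hasSum_pow_add_mul_one_sub (sub_nonneg.2 hη1.le) (by linarith) M
    rw [sub_sub_cancel] at hgeom
    rw [← hgeom.tsum_eq, ENNReal.ofReal_tsum_of_nonneg (fun i => by positivity) hgeom.summable]
    refine tsum_congr fun i => ?_
    rw [measure_lastSlot_lt_of_lt hF hwf (by omega), one_mul, hYgeom _ (by omega),
      show i + (M + 1) - 1 = i + M by omega]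
  have hsplit : P {ω | lastSlot (L ω, S ω) < Y ω} =
      ∑' y, P {ω | lastSlot (L ω, S ω) < y} * P {ω | Y ω = y} :=
    measure_setOf_lt_eq_tsum
      (measurableSet_preimage_of_measurableSet_fiber hF {p | lastSlot p < ·}) hYmeas
      fun y => measure_preimage_inter_eq_mul_of_fiber P hF (fun p => by
        rw [preimage_prodMk_singleton]; exact hindep p.1 p.2 y) {p | lastSlot p < y}
  have hnonneg : ∀ y, 0 ≤ η * (1 - η) ^ (y - 1) * allBeforeProb M ℓmax Λ y := fun y => by
    have := allBeforeProb_nonneg hΛ0 (M := M) y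
    positivity
  rw [hsplit, ← ENNReal.summable.sum_add_tsum_nat_add' (k := M + 1), htail,
    Nat.range_succ_eq_Icc_zero, ← insert_Icc_add_one_left_eq_Icc M.zero_le, sum_insert (by simp),
    zero_add, hY0, mul_zero, zero_add, sum_congr rfl hhead,
    ← ENNReal.ofReal_sum_of_nonneg fun y _ => hnonneg y,
    ← ENNReal.ofReal_add (sum_nonneg fun y _ => hnonneg y) (by positivity)]
  rfl

/-- a device draws a degree `L` with `P(L = ℓ) = Λ_ℓ` on `{0,…,ℓ_max}`;
given `L = ℓ ≥ 1`, `S` is a uniformly random `ℓ`-element subset of `{1,…,M}` and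
`X := max S`; given `L = 0`, `X := 0`. `Y` is independent of `(L,S)` and geometric
with `P(Y = y) = (1−η)^{y−1}·η`. Then
`P(X < Y) = Σ_{y=1}^{M} η·(1−η)^{y−1}·Σ_{ℓ=0}^{ℓ_max} Λ_ℓ·(y−1)!·(M−ℓ)!/((y−ℓ−1)!·M!)
  + (1−η)^M`, where summands with `y ≤ ℓ` are interpreted as `0`. -/
theorem stmt_5 {Ω : Type*} [MeasurableSpace Ω] (P : Measure Ω) [IsProbabilityMeasure P]
    (M ℓmax : ℕ) (hM : 1 ≤ M) (hℓmax : ℓmax ≤ M) (η : ℝ) (hη0 : 0 < η) (hη1 : η < 1)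
    (Λ : ℕ → ℝ) (hΛ0 : ∀ ℓ ≤ ℓmax, 0 ≤ Λ ℓ)
    (hΛ1 : ∑ ℓ ∈ Finset.range (ℓmax + 1), Λ ℓ = 1)
    (L : Ω → ℕ) (S : Ω → Finset ℕ) (X Y : Ω → ℕ)
    (hLmeas : ∀ k : ℕ, MeasurableSet {ω | L ω = k})
    (hLSmeas : ∀ (k : ℕ) (s : Finset ℕ), MeasurableSet {ω | L ω = k ∧ S ω = s})
    (hYmeas : ∀ k : ℕ, MeasurableSet {ω | Y ω = k})
    (hLsupp : P {ω | L ω ≤ ℓmax} = 1)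
    (hLdist : ∀ ℓ ≤ ℓmax, P {ω | L ω = ℓ} = ENNReal.ofReal (Λ ℓ))
    (hScond : ∀ ℓ, 1 ≤ ℓ → ℓ ≤ ℓmax → ∀ s ∈ (Finset.Icc 1 M).powersetCard ℓ,
      P {ω | L ω = ℓ ∧ S ω = s} = P {ω | L ω = ℓ} * (M.choose ℓ : ℝ≥0∞)⁻¹)
    (hSsupp : ∀ ℓ, 1 ≤ ℓ → ℓ ≤ ℓmax →
      P {ω | L ω = ℓ ∧ S ω ∈ (Finset.Icc 1 M).powersetCard ℓ} = P {ω | L ω = ℓ})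
    (hX : ∀ ω, (L ω = 0 → X ω = 0) ∧
      (L ω ≠ 0 → X ω ∈ S ω ∧ ∀ i ∈ S ω, i ≤ X ω))
    (hY0 : P {ω | Y ω = 0} = 0)
    (hYgeom : ∀ k : ℕ, 1 ≤ k →
      P {ω | Y ω = k} = ENNReal.ofReal ((1 - η) ^ (k - 1) * η))
    (hindep : ∀ (k : ℕ) (s : Finset ℕ) (y : ℕ),
      P ({ω | L ω = k ∧ S ω = s} ∩ {ω | Y ω = y}) =
        P {ω | L ω = k ∧ S ω = s} * P {ω | Y ω = y}) :
    P {ω | X ω < Y ω} =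
      ENNReal.ofReal (∑ y ∈ Finset.Icc 1 M, η * (1 - η) ^ (y - 1) *
        ∑ ℓ ∈ Finset.range (ℓmax + 1), Λ ℓ *
          (if ℓ < y then ((y - 1).factorial * (M - ℓ).factorial : ℝ) /
            ((y - ℓ - 1).factorial * M.factorial) else 0) + (1 - η) ^ M) :=
  stmt_5_general P M ℓmax hℓmax η hη0 hη1 Λ hΛ0 L S X Y hLSmeas hYmeas hLsupp hLdist hScond hSsupp
    hX hY0 hYgeom hindep
end

section
/- Let E ≥ 1, M ≥ 2, 1 ≤ ℓ_max < M, and η ∈ (0,1). For each b ∈ {0,…,E} let (Ξ_{ℓ,b})_{ℓ=0}^{min(b,ℓ_max)} be nonnegative with Σ_ℓ Ξ_{ℓ,b} = 1, and assume Ξ_{0,b} > 0 for every b ∈ {0,…,E} and Ξ_{min(b,ℓ_max),b} > 0 for every b ∈ {1,…,E}. Define the (E+1)×(E+1) matrix P by P(b₁, b₂) := Σ_ℓ Ξ_{ℓ,b₁} · Bino(b₂ − b₁ + ℓ; M, η) for 0 ≤ b₂ < E and P(b₁, E) := Σ_ℓ Ξ_{ℓ,b₁} · ( 1 − Σ_{k=0}^{E−b₁+ℓ−1}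 Bino(k; M, η) ), where Bino(k; M, η) := C(M,k)·η^k·(1−η)^{M−k} for 0 ≤ k ≤ M and Bino(k; M, η) := 0 otherwise. Then P is irreducible: for every pair b₁, b₂ ∈ {0,…,E} there exists an integer n ≥ 1 such that the (b₁, b₂) entry of the matrix power Pⁿ is strictly positive. -/
/-!
Irreducibility comes from the tridiagonal band of `P`: in one frame the battery can stay put
(spend nothing, harvest nothing), go up by one (spend nothing, harvest once) or, when `b₁ ≥ 1`,
go down by one (spend `ℓ = min b₁ ℓ_max ≥ 1` units and harvest `ℓ - 1 < M`), and each of these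
moves has positive probability. For a nonnegative matrix on
`{0,…,N-1}` whose entries with `|i - j| ≤ 1` are all positive, every entry of the `N`-th power
is positive.
-/

/-- `Bino(k; M, η) := C(M,k)·η^k·(1−η)^{M−k}` for `0 ≤ k ≤ M`, and `0` otherwise. -/
noncomputable def bino (M : ℕ) (η : ℝ) (k : ℤ) : ℝ :=
  if 0 ≤ k ∧ k ≤ M then
    (M.choose k.toNat : ℝ) * η ^ k.toNat * (1 - η) ^ (M - k.toNat)
  else 0

/-- Transition matrix of the initial battery level Markov chain (Theorem 2, AVOID
scheme with maximum degree `ℓ_max`): a device with initial level `b₁` spends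
`ℓ ≤ min(b₁, ℓ_max)` units with probability `Ξ_{ℓ,b₁}`;
`P(b₁, b₂) = Σ_ℓ Ξ_{ℓ,b₁}·Bino(b₂ − b₁ + ℓ; M, η)` for `b₂ < E`, and
`P(b₁, E) = Σ_ℓ Ξ_{ℓ,b₁}·(1 − Σ_{k=0}^{E−b₁+ℓ−1} Bino(k; M, η))`. -/
noncomputable def transPmat (E M ℓmax : ℕ) (η : ℝ) (Ξ : ℕ → ℕ → ℝ) :
    Matrix (Fin (E + 1)) (Fin (E + 1)) ℝ := fun b₁ b₂ =>
  if (b₂ : ℕ) < E then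
    ∑ ℓ ∈ Finset.range (min (b₁ : ℕ) ℓmax + 1),
      Ξ ℓ (b₁ : ℕ) * bino M η (((b₂ : ℕ) : ℤ) - ((b₁ : ℕ) : ℤ) + (ℓ : ℤ))
  else
    ∑ ℓ ∈ Finset.range (min (b₁ : ℕ) ℓmax + 1),
      Ξ ℓ (b₁ : ℕ) * (1 - ∑ k ∈ Finset.range (E - (b₁ : ℕ) + ℓ), bino M η (k : ℤ))

namespace Matrix

variable {R : Type*} [Semiring R] [PartialOrder R] [IsStrictOrderedRing R] {N : ℕ}
  {A : Matrix (Fin N) (Fin N) R}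

theorem pow_apply_pos_of_band_pos (hA : ∀ i j, 0 ≤ A i j)
    (hband : ∀ i j : Fin N, (i : ℕ) ≤ j + 1 → (j : ℕ) ≤ i + 1 → 0 < A i j) (m : ℕ) :
    ∀ i j : Fin N, (i : ℕ) ≤ j + (m + 1) → (j : ℕ) ≤ i + (m + 1) → 0 < (A ^ (m + 1)) i j := by
  induction m with
  | zero => simpa using hband
  | succ m ih =>
    intro i j hij hji
    -- `k` is one step from `i` towards `j`
    obtain ⟨k, hk⟩ : ∃ k : Fin N, (k : ℕ) = min ((i : ℕ) + 1) (max ((i : ℕ) - 1) j) :=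
      ⟨⟨_, by omega⟩, rfl⟩
    rw [pow_succ', mul_apply]
    refine Finset.sum_pos' (fun l _ => mul_nonneg (hA i l) (pow_apply_nonneg hA _ l j))
      ⟨k, Finset.mem_univ _, mul_pos ?_ ?_⟩
    · exact hband i k (by omega) (by omega)
    · exact ih k j (by omega) (by omega)

theorem exists_pow_apply_pos_of_band_pos (hA : ∀ i j, 0 ≤ A i j)
    (hband : ∀ i j : Fin N, (i : ℕ) ≤ j + 1 → (j : ℕ) ≤ i + 1 → 0 < A i j) (i j : Fin N) :
    ∃ n, 1 ≤ n ∧ 0 < (A ^ n) i j := by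
  obtain ⟨m, rfl⟩ : ∃ m, N = m + 1 := Nat.exists_eq_add_one.mpr i.pos
  exact ⟨m + 1, by omega, pow_apply_pos_of_band_pos hA hband m i j (by omega) (by omega)⟩

end Matrix

section Bino

variable {M : ℕ} {η : ℝ}

theorem bino_nonneg (hη0 : 0 ≤ η) (hη1 : η ≤ 1) (k : ℤ) : 0 ≤ bino M η k := by
  unfold bino
  split_ifs
  · have : 0 ≤ 1 - η := by linarith
    positivity
  · rfl

theorem bino_pos (hη0 : 0 < η) (hη1 : η < 1) {k : ℤ} (hk0 : 0 ≤ k) (hkM : k ≤ M) :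
    0 < bino M η k := by
  have : 0 < 1 - η := by linarith
  have : 0 < (M.choose k.toNat : ℝ) := by exact_mod_cast Nat.choose_pos (by omega)
  rw [bino, if_pos ⟨hk0, hkM⟩]
  positivity

theorem bino_eq_zero_of_lt {k : ℤ} (hk : (M : ℤ) < k) : bino M η k = 0 :=
  if_neg fun h => by omega

theorem sum_range_bino_of_le {j : ℕ} (hj : M + 1 ≤ j) :
    ∑ k ∈ Finset.range j, bino M η k = 1 := by
  rw [Finset.eventually_constant_sum (fun k hk => bino_eq_zero_of_lt (by omega)) hj]
  calc ∑ k ∈ Finset.range (M + 1), bino M η k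
      = ∑ k ∈ Finset.range (M + 1), η ^ k * (1 - η) ^ (M - k) * M.choose k := by
        refine Finset.sum_congr rfl fun k hk => ?_
        rw [Finset.mem_range] at hk
        rw [bino, if_pos ⟨by omega, by omega⟩, Int.toNat_natCast]
        ring
    _ = 1 := by rw [← add_pow, add_sub_cancel, one_pow]

theorem sum_range_bino_le_one (hη0 : 0 ≤ η) (hη1 : η ≤ 1) (j : ℕ) :
    ∑ k ∈ Finset.range j, bino M η k ≤ 1 :=
  calc ∑ k ∈ Finset.range j, bino M η k
      ≤ ∑ k ∈ Finset.range (j + M + 1), bino M η k :=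
        Finset.sum_le_sum_of_subset_of_nonneg (Finset.range_subset_range.mpr (by omega))
          fun k _ _ => bino_nonneg hη0 hη1 k
    _ = 1 := sum_range_bino_of_le (by omega)

theorem sum_range_bino_lt_one (hη0 : 0 < η) (hη1 : η < 1) {j : ℕ} (hj : j ≤ M) :
    ∑ k ∈ Finset.range j, bino M η k < 1 := by
  have h := sum_range_bino_le_one (M := M) hη0.le hη1.le (j + 1)
  rw [Finset.sum_range_succ] at h
  linarith [bino_pos (M := M) hη0 hη1 (Int.natCast_nonneg j) (by exact_mod_cast hj)]

end Bino

section TransPmat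

variable {E M ℓmax : ℕ} {η : ℝ} {Ξ : ℕ → ℕ → ℝ}

theorem transPmat_nonneg (hη0 : 0 < η) (hη1 : η < 1)
    (hΞ0 : ∀ b ≤ E, ∀ ℓ ≤ min b ℓmax, 0 ≤ Ξ ℓ b) (b₁ b₂ : Fin (E + 1)) :
    0 ≤ transPmat E M ℓmax η Ξ b₁ b₂ := by
  have hΞ : ∀ ℓ ∈ Finset.range (min (b₁ : ℕ) ℓmax + 1), 0 ≤ Ξ ℓ b₁ := fun ℓ hℓ =>
    hΞ0 _ (by omega) ℓ (Finset.mem_range_succ_iff.mp hℓ)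
  unfold transPmat
  split_ifs
  · exact Finset.sum_nonneg fun ℓ hℓ => mul_nonneg (hΞ ℓ hℓ) (bino_nonneg hη0.le hη1.le _)
  · exact Finset.sum_nonneg fun ℓ hℓ =>
      mul_nonneg (hΞ ℓ hℓ) (sub_nonneg.mpr (sum_range_bino_le_one hη0.le hη1.le _))

theorem transPmat_apply_pos_of_lt (hη0 : 0 < η) (hη1 : η < 1)
    (hΞ0 : ∀ b ≤ E, ∀ ℓ ≤ min b ℓmax, 0 ≤ Ξ ℓ b) {b₁ b₂ : Fin (E + 1)} (hb₂ : (b₂ : ℕ) < E)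
    {ℓ : ℕ} (hℓ : ℓ ≤ min (b₁ : ℕ) ℓmax) (hΞℓ : 0 < Ξ ℓ b₁)
    (hk0 : (b₁ : ℕ) ≤ b₂ + ℓ) (hkM : (b₂ : ℕ) + ℓ ≤ b₁ + M) :
    0 < transPmat E M ℓmax η Ξ b₁ b₂ := by
  rw [transPmat, if_pos hb₂]
  refine Finset.sum_pos' (fun ℓ' hℓ' => mul_nonneg
      (hΞ0 _ (by omega) ℓ' (Finset.mem_range_succ_iff.mp hℓ')) (bino_nonneg hη0.le hη1.le _))
    ⟨ℓ, Finset.mem_range_succ_iff.mpr hℓ, mul_pos hΞℓ (bino_pos hη0 hη1 (by omega) (by omega))⟩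

theorem transPmat_apply_last_pos (hη0 : 0 < η) (hη1 : η < 1)
    (hΞ0 : ∀ b ≤ E, ∀ ℓ ≤ min b ℓmax, 0 ≤ Ξ ℓ b) (hΞzero : ∀ b ≤ E, 0 < Ξ 0 b)
    {b₁ b₂ : Fin (E + 1)} (hb₂ : (b₂ : ℕ) = E) (hb₁ : E ≤ b₁ + M) :
    0 < transPmat E M ℓmax η Ξ b₁ b₂ := by
  rw [transPmat, if_neg (by omega)]
  refine Finset.sum_pos' (fun ℓ hℓ => mul_nonneg
      (hΞ0 _ (by omega) ℓ (Finset.mem_range_succ_iff.mp hℓ))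
      (sub_nonneg.mpr (sum_range_bino_le_one hη0.le hη1.le _)))
    ⟨0, by simp, mul_pos (hΞzero _ (by omega))
      (sub_pos.mpr (sum_range_bino_lt_one hη0 hη1 (by omega)))⟩

theorem transPmat_band_pos (hℓ1 : 1 ≤ ℓmax) (hℓM : ℓmax < M) (hη0 : 0 < η) (hη1 : η < 1)
    (hΞ0 : ∀ b ≤ E, ∀ ℓ ≤ min b ℓmax, 0 ≤ Ξ ℓ b) (hΞzero : ∀ b ≤ E, 0 < Ξ 0 b)
    (hΞtop : ∀ b, 1 ≤ b → b ≤ E → 0 < Ξ (min b ℓmax) b)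
    (b₁ b₂ : Fin (E + 1)) (h₁₂ : (b₁ : ℕ) ≤ b₂ + 1) (h₂₁ : (b₂ : ℕ) ≤ b₁ + 1) :
    0 < transPmat E M ℓmax η Ξ b₁ b₂ := by
  rcases b₂.is_le.lt_or_eq with hb₂ | hb₂
  · rcases le_or_gt (b₁ : ℕ) b₂ with hup | hdown
    · exact transPmat_apply_pos_of_lt hη0 hη1 hΞ0 hb₂ (Nat.zero_le _)
        (hΞzero _ b₁.is_le) (by omega) (by omega)
    · exact transPmat_apply_pos_of_lt hη0 hη1 hΞ0 hb₂ le_rfl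
        (hΞtop _ (by omega) b₁.is_le) (by omega) (by omega)
  · exact transPmat_apply_last_pos hη0 hη1 hΞ0 hΞzero hb₂ (by omega)

end TransPmat

theorem stmt_11_general (E M ℓmax : ℕ)
    (hℓ1 : 1 ≤ ℓmax) (hℓM : ℓmax < M)
    (η : ℝ) (hη0 : 0 < η) (hη1 : η < 1)
    (Ξ : ℕ → ℕ → ℝ)
    (hΞ0 : ∀ b ≤ E, ∀ ℓ ≤ min b ℓmax, 0 ≤ Ξ ℓ b)
    (hΞzero : ∀ b ≤ E, 0 < Ξ 0 b)
    (hΞtop : ∀ b, 1 ≤ b → b ≤ E → 0 < Ξ (min b ℓmax) b) :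
    ∀ b₁ b₂ : Fin (E + 1), ∃ n : ℕ, 1 ≤ n ∧
      0 < (transPmat E M ℓmax η Ξ ^ n) b₁ b₂ :=
  Matrix.exists_pow_apply_pos_of_band_pos (transPmat_nonneg hη0 hη1 hΞ0)
    (transPmat_band_pos hℓ1 hℓM hη0 hη1 hΞ0 hΞzero hΞtop)

/-- under the stated positivity assumptions on the conditional energy
expenditure distribution `Ξ`, the transition matrix is irreducible: for every pair of
states `b₁, b₂ ∈ {0,…,E}` there is `n ≥ 1` with `(Pⁿ)(b₁, b₂) > 0`. -/
theorem stmt_11 (E M ℓmax : ℕ) (hE : 1 ≤ E) (hM : 2 ≤ M)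
    (hℓ1 : 1 ≤ ℓmax) (hℓM : ℓmax < M)
    (η : ℝ) (hη0 : 0 < η) (hη1 : η < 1)
    (Ξ : ℕ → ℕ → ℝ)
    (hΞ0 : ∀ b ≤ E, ∀ ℓ ≤ min b ℓmax, 0 ≤ Ξ ℓ b)
    (hΞ1 : ∀ b ≤ E, ∑ ℓ ∈ Finset.range (min b ℓmax + 1), Ξ ℓ b = 1)
    (hΞzero : ∀ b ≤ E, 0 < Ξ 0 b)
    (hΞtop : ∀ b, 1 ≤ b → b ≤ E → 0 < Ξ (min b ℓmax) b) :
    ∀ b₁ b₂ : Fin (E + 1), ∃ n : ℕ, 1 ≤ n ∧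
      0 < (transPmat E M ℓmax η Ξ ^ n) b₁ b₂ :=
  stmt_11_general E M ℓmax hℓ1 hℓM η hη0 hη1 Ξ hΞ0 hΞzero hΞtop
end

section
/- Let V and C be finite sets, E ⊆ V × C, A ⊆ E, and let R and R' be the least closed sets defined in the context. Then R ∩ A = R'. In other words, the IDENTIFY decoder, which does not know which replicas were dropped, resolves exactly the same set of active edges as the genie-aided decoder that knows the positions of the dropped replicas (Theorem 3). -/
/-- Least set `R ⊆ Ed` closed under the two decoding rules of the IDENTIFY decoder on
a bipartite graph with edge set `Ed ⊆ V × C` and active-edge set `A ⊆ Ed`: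
(VN rule) if `(v,c) ∈ R` and `(v,c') ∈ Ed` then `(v,c') ∈ R`;
(CN rule) if `(v,c) ∈ A` and every `(v',c) ∈ A` with `v' ≠ v` is in `R`,
then `(v,c) ∈ R`.
The genie-aided decoder (which knows the dropped replicas) is obtained by
instantiating the first argument `Ed` with `A` itself. -/
inductive Resolved {V C : Type*} (Ed A : Set (V × C)) : V × C → Prop
  | vn {v : V} {c c' : C} : Resolved Ed A (v, c) → (v, c') ∈ Ed → Resolved Ed A (v, c')
  | cn {v : V} {c : C} : (v, c) ∈ A →
      (∀ v' : V, v' ≠ v → (v', c) ∈ A → Resolved Ed A (v', c)) → Resolved Ed A (v, c)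

/-- Theorem 3: `R ∩ A = R'` — the IDENTIFY decoder resolves exactly the
same set of active edges as the genie-aided decoder. -/
theorem stmt_13 {V C : Type*} [Fintype V] [Fintype C]
    (Ed A : Set (V × C)) (hA : A ⊆ Ed) :
    {e | Resolved Ed A e} ∩ A = {e | Resolved A A e} := by
  have key : ∀ e, Resolved Ed A e → ∀ c', (e.1, c') ∈ A → Resolved A A (e.1, c') := by
    intro e he
    induction he with
    | vn _ _ ih => exact ih
    | cn hvc hall ih =>
        intro c' hc'
        have base : Resolved A A (_, _) :=
          Resolved.cn hvc (fun v' hne hv' => ih v' hne hv' _ hv')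
        exact Resolved.vn base hc'
  have mem : ∀ e, Resolved A A e → e ∈ A := by
    intro e he
    induction he with
    | vn _ h _ => exact h
    | cn h _ _ => exact h
  have mono : ∀ e, Resolved A A e → Resolved Ed A e := by
    intro e he
    induction he with
    | vn _ h ih => exact Resolved.vn ih (hA h)
    | cn h hall ih => exact Resolved.cn h ih
  ext e
  constructor
  · rintro ⟨hR, hAe⟩
    exact key e hR e.2 hAe
  · intro hR'
    exact ⟨mono e hR', mem e hR'⟩
end

section
/- Let V and C be finite sets, E ⊆ V × C, A ⊆ E, and let R and R' be the least closed sets defined in the context. Then R ∩ A ⊆ R': every active edge resolved by the IDENTIFY decoder is also resolved by the genie-aided decoder. -/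
/- A VN step of IDENTIFY may pass through a dropped edge, so the induction has to carry
all active edges of the variable node, not just the resolved edge itself. -/
theorem Resolved.genie_of_mem {V C : Type*} {Ed A : Set (V × C)} {e : V × C}
    (h : Resolved Ed A e) {c : C} (hc : (e.1, c) ∈ A) : Resolved A A (e.1, c) := by
  induction h generalizing c with
  | vn _ _ ih => exact ih hc
  | cn hvc _ ih =>
    have hgenie := Resolved.cn hvc fun v' hne hv'c => ih v' hne hv'c hv'c
    exact hgenie.vn hc

theorem stmt_15_general {V C : Type*}
    (Ed A : Set (V × C)) :
    {e | Resolved Ed A e} ∩ A ⊆ {e | Resolved A A e} :=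
  fun _ ⟨hR, hA⟩ => hR.genie_of_mem hA

/-- `R ∩ A ⊆ R'` — every active edge resolved by the IDENTIFY decoder is
also resolved by the genie-aided decoder. -/
theorem stmt_15 {V C : Type*} [Fintype V] [Fintype C]
    (Ed A : Set (V × C)) (hA : A ⊆ Ed) :
    {e | Resolved Ed A e} ∩ A ⊆ {e | Resolved A A e} :=
  stmt_15_general Ed A
end
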